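/- If two words w and w' over the positive integers are related by the Knuth relation (K'), i.e., w = u·acb·v and w' = u·cab·v with a ≤ b < c, then φ_w(w) and φ_w(w') are related by the Knuth relation (K') over the labeled alphabet Ñ. -/

import Mathlib

open scoped BigOperators

/-! ## Words and Knuth relations -/

/-- Knuth relation (K): `u·bca·v ~ u·bac·v` with `a < b ≤ c`. -/
def KnuthK {α : Type*} [LinearOrder α] (w w' : List α) : Prop :=
  ∃ (u v : List α) (a b c : α), a < b ∧ b ≤ c ∧
    w = u ++ [b, c, a] ++ v ∧ w' = u ++ [b, a, c] ++ v

/-- Knuth relation (K'): `u·acb·v ~ u·cab·v` with `a ≤ b < c`. -/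
def KnuthK' {α : Type*} [LinearOrder α] (w w' : List α) : Prop :=
  ∃ (u v : List α) (a b c : α), a ≤ b ∧ b < c ∧
    w = u ++ [a, c, b] ++ v ∧ w' = u ++ [c, a, b] ++ v

/-- One step of a Knuth relation, in either direction. -/
def KnuthRel {α : Type*} [LinearOrder α] (w w' : List α) : Prop :=
  KnuthK w w' ∨ KnuthK w' w ∨ KnuthK' w w' ∨ KnuthK' w' w

/-- Knuth equivalence: the reflexive-transitive closure of the Knuth relations. -/
def KnuthEquiv {α : Type*} [LinearOrder α] : List α → List α → Prop :=
  Relation.ReflTransGen KnuthRel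

/-- The labeled alphabet Ñ = ℕ ×ₗ ℕ, ordered first by the letter, then by the label. -/
abbrev LblN := Lex (ℕ × ℕ)

instance : Inhabited LblN := ⟨toLex default⟩

/-- The labeling map φ_w : each occurrence of the integer `k` gets subscripts 1, 2, ...
from left to right. -/
def phiW (w : List ℕ) : List LblN :=
  ((List.range w.length).zip w).map fun p => toLex (p.2, (w.take p.1).count p.2 + 1)

/-- The label-forgetting map, sending `k_l` to `k`. -/
def forgetW (w : List LblN) : List ℕ := w.map fun x => (ofLex x).1

/-! ## Partitions, skew shapes, tableaux -/

/-- A partition, recorded as its sequence of (1-indexed) row lengths, with `p 0 = 0`. -/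
def IsPartition (p : ℕ → ℕ) : Prop :=
  p 0 = 0 ∧ (∀ i, 1 ≤ i → p (i + 1) ≤ p i) ∧ ∃ N, ∀ i, N ≤ i → p i = 0

/-- The empty partition. -/
def zeroPart : ℕ → ℕ := fun _ => 0

/-- The boxes of the skew diagram λ/μ (rows and columns indexed from 1). -/
def cells (lam mu : ℕ → ℕ) : Set (ℕ × ℕ) :=
  {c | 1 ≤ c.1 ∧ mu c.1 < c.2 ∧ c.2 ≤ lam c.1}

/-- The semistandardness condition for a filling of λ/μ: rows weakly increase and
columns strictly increase. -/
def IsSSYT {α : Type*} [Preorder α] (lam mu : ℕ → ℕ) (T : ℕ × ℕ → α) : Prop :=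
  (∀ i j, (i, j) ∈ cells lam mu → (i, j + 1) ∈ cells lam mu → T (i, j) ≤ T (i, j + 1)) ∧
  (∀ i j, (i, j) ∈ cells lam mu → (i + 1, j) ∈ cells lam mu → T (i, j) < T (i + 1, j))

/-- The conjugate partition: `conj p j = #{i ≥ 1 | p i ≥ j}`. -/
noncomputable def conj (p : ℕ → ℕ) (j : ℕ) : ℕ :=
  Set.ncard {i : ℕ | 1 ≤ i ∧ j ≤ p i}

/-- The number of (nonempty) rows of a shape. -/
noncomputable def numRows (lam : ℕ → ℕ) : ℕ :=
  sInf {N | ∀ i, N < i → lam i = 0}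

/-- The i-th row of a tableau, read left to right. -/
def rowOf {α : Type*} (lam mu : ℕ → ℕ) (T : ℕ × ℕ → α) (i : ℕ) : List α :=
  (List.range (lam i - mu i)).map fun k => T (i, mu i + k + 1)

/-- Rows `n, n-1, ..., 1` of a tableau, concatenated. -/
def rowWordUpTo {α : Type*} (lam mu : ℕ → ℕ) (T : ℕ × ℕ → α) : ℕ → List α
  | 0 => []
  | n + 1 => rowOf lam mu T (n + 1) ++ rowWordUpTo lam mu T n

/-- The row word of a tableau: rows read left to right, from the bottom row up. -/
noncomputable def rowWord {α : Type*} (lam mu : ℕ → ℕ) (T : ℕ × ℕ → α) : List α :=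
  rowWordUpTo lam mu T (numRows lam)

/-- The rectification of a word: the (shape, tableau) pair of a normal-shape
semistandard tableau whose row word is Knuth equivalent to the given word. -/
noncomputable def rectPair {α : Type*} [LinearOrder α] [Inhabited α] (w : List α) :
    (ℕ → ℕ) × (ℕ × ℕ → α) := by
  classical
  exact if h : ∃ p : (ℕ → ℕ) × (ℕ × ℕ → α),
      IsPartition p.1 ∧ IsSSYT p.1 zeroPart p.2 ∧ KnuthEquiv (rowWord p.1 zeroPart p.2) w
    then h.choose else (zeroPart, fun _ => default)

/-- The shape of the rectification of a word. -/
noncomputable def rectShape {α : Type*} [LinearOrder α] [Inhabited α] (w : List α) : ℕ → ℕ :=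
  (rectPair w).1

/-- The tableau of the rectification of a word. -/
noncomputable def rectTab {α : Type*} [LinearOrder α] [Inhabited α] (w : List α) :
    ℕ × ℕ → α :=
  (rectPair w).2

/-- The labeling map φ_T on tableaux: each occurrence of the integer `k` gets subscripts
1, 2, ... from the bottom row up, left to right within each row. -/
noncomputable def phiT (lam mu : ℕ → ℕ) (T : ℕ × ℕ → ℕ) : ℕ × ℕ → LblN :=
  fun c => toLex (T c,
    Set.ncard {d ∈ cells lam mu | T d = T c ∧ (c.1 < d.1 ∨ (d.1 = c.1 ∧ d.2 < c.2))} + 1)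

/-! ## Arms and body -/

/-- `∑_{i ≥ 2} (λ_i − μ_i)`. -/
noncomputable def tailSum (lam mu : ℕ → ℕ) : ℕ :=
  ∑ᶠ i : ℕ, if 2 ≤ i then lam i - mu i else 0

/-- `m = min{λ₂, Σ_{i≥2}(λᵢ − μᵢ)}`. -/
noncomputable def armM (lam mu : ℕ → ℕ) : ℕ := min (lam 2) (tailSum lam mu)

/-- `n = min{λ'₂, Σ_{j≥2}(λ'ⱼ − μ'ⱼ)}`. -/
noncomputable def armN (lam mu : ℕ → ℕ) : ℕ := min (conj lam 2) (tailSum (conj lam) (conj mu))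

/-- The right-arm of λ/μ: boxes `(1, m+μ₁), ..., (1, λ₁)`. -/
noncomputable def rightArm (lam mu : ℕ → ℕ) : Set (ℕ × ℕ) :=
  {c | c.1 = 1 ∧ armM lam mu + mu 1 ≤ c.2 ∧ c.2 ≤ lam 1}

/-- The left-arm of λ/μ: boxes `(n+μ'₁, 1), ..., (λ'₁, 1)`. -/
noncomputable def leftArm (lam mu : ℕ → ℕ) : Set (ℕ × ℕ) :=
  {c | c.2 = 1 ∧ armN lam mu + conj mu 1 ≤ c.1 ∧ c.1 ≤ conj lam 1}

/-- The body of λ/μ: the boxes that are in neither arm. -/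
noncomputable def body (lam mu : ℕ → ℕ) : Set (ℕ × ℕ) :=
  cells lam mu \ (rightArm lam mu ∪ leftArm lam mu)

/-! ## Semistandard tableaux over positive integers, Schur multiple zeta functions -/

/-- Semistandard Young tableaux of shape λ/μ with positive integer entries,
normalized to be `0` outside the diagram. -/
def SSYTset (lam mu : ℕ → ℕ) : Set (ℕ × ℕ → ℕ) :=
  {T | IsSSYT lam mu T ∧ (∀ c ∈ cells lam mu, 1 ≤ T c) ∧ ∀ c, c ∉ cells lam mu → T c = 0}

/-- The Schur multiple zeta function of shape λ/μ. -/
noncomputable def schurZeta (lam mu : ℕ → ℕ) (s : ℕ × ℕ → ℂ) : ℂ :=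
  ∑' M : SSYTset lam mu, ∏ᶠ c ∈ cells lam mu, ((M : ℕ × ℕ → ℕ) c : ℂ) ^ (-(s c))

/-- A corner of λ/μ. -/
def ShapeCorner (lam mu : ℕ → ℕ) (c : ℕ × ℕ) : Prop :=
  c ∈ cells lam mu ∧ (c.1 + 1, c.2) ∉ cells lam mu ∧ (c.1, c.2 + 1) ∉ cells lam mu

/-- The domain of absolute convergence `W_{λ/μ}`. -/
def InDomain (lam mu : ℕ → ℕ) (s : ℕ × ℕ → ℂ) : Prop :=
  ∀ c ∈ cells lam mu, 1 ≤ (s c).re ∧ (ShapeCorner lam mu c → 1 < (s c).re)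

/-! ## The shape μ * ν -/

/-- The outer shape ψ of μ * ν: `ψᵢ = μ₁ + νᵢ` for `i ≤ ℓ(ν)`, `ψᵢ = μ_{i−ℓ(ν)}` else. -/
noncomputable def starOuter (mu nu : ℕ → ℕ) : ℕ → ℕ := fun i =>
  if i = 0 then 0 else if i ≤ conj nu 1 then mu 1 + nu i else mu (i - conj nu 1)

/-- The inner (rectangle) shape of μ * ν : μ₁ columns and ν'₁ rows. -/
noncomputable def starInner (mu nu : ℕ → ℕ) : ℕ → ℕ := fun i =>
  if 1 ≤ i ∧ i ≤ conj nu 1 then mu 1 else 0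

/-- The filling `S * T` of μ * ν : `S` (shape μ) below, `T` (shape ν) to the right. -/
noncomputable def starTab {γ : Type*} (mu nu : ℕ → ℕ) (s t : ℕ × ℕ → γ) : ℕ × ℕ → γ :=
  fun c => if c.1 ≤ conj nu 1 then t (c.1, c.2 - mu 1) else s (c.1 - conj nu 1, c.2)

/-! ## Schur functions as formal power series, Littlewood–Richardson coefficients -/

/-- The (skew) Schur function `s_{λ/μ}` as a formal power series in variables
`x₀, x₁, x₂, ...` : the coefficient of a monomial `d` is the number of semistandard
tableaux of shape λ/μ and content `d`. -/
noncomputable def schurSeries (lam mu : ℕ → ℕ) : MvPowerSeries ℕ ℤ :=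
  fun d => (Set.ncard {T ∈ SSYTset lam mu |
    ∀ k : ℕ, d k = Set.ncard {c ∈ cells lam mu | T c = k}} : ℤ)

/-- The power series `Σ_λ c_λ · s_λ`, the sum ranging over all partitions λ. -/
noncomputable def seriesSum (cc : (ℕ → ℕ) → ℕ) : MvPowerSeries ℕ ℤ :=
  fun d => ∑ᶠ lam ∈ {p : ℕ → ℕ | IsPartition p}, (cc lam : ℤ) * schurSeries lam zeroPart d

/-! ## Jeu de taquin slides -/

/-- One elementary jeu de taquin slide on a configuration (hole, filled region, filling):
the smaller of the entries to the right of and below the hole moves into the hole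
(the one below moving in case of a tie), and the hole moves to the vacated box. -/
inductive JdtStep {α : Type*} [LinearOrder α] :
    ((ℕ × ℕ) × Set (ℕ × ℕ) × (ℕ × ℕ → α)) → ((ℕ × ℕ) × Set (ℕ × ℕ) × (ℕ × ℕ → α)) → Prop
  | right (h : ℕ × ℕ) (S : Set (ℕ × ℕ)) (T : ℕ × ℕ → α)
      (hr : (h.1, h.2 + 1) ∈ S)
      (hcmp : (h.1 + 1, h.2) ∈ S → T (h.1, h.2 + 1) < T (h.1 + 1, h.2)) :
      JdtStep (h, S, T)
        ((h.1, h.2 + 1), insert h (S \ {(h.1, h.2 + 1)}),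
          Function.update T h (T (h.1, h.2 + 1)))
  | down (h : ℕ × ℕ) (S : Set (ℕ × ℕ)) (T : ℕ × ℕ → α)
      (hd : (h.1 + 1, h.2) ∈ S)
      (hcmp : (h.1, h.2 + 1) ∈ S → T (h.1 + 1, h.2) ≤ T (h.1, h.2 + 1)) :
      JdtStep (h, S, T)
        ((h.1 + 1, h.2), insert h (S \ {(h.1 + 1, h.2)}),
          Function.update T h (T (h.1 + 1, h.2)))

/-- An inside corner of λ/μ: a corner `c` of the deleted diagram μ. -/
def InsideCorner (lam mu : ℕ → ℕ) (c : ℕ × ℕ) : Prop :=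
  1 ≤ c.1 ∧ 1 ≤ c.2 ∧ c.2 = mu c.1 ∧ mu (c.1 + 1) < c.2

/-- A full jeu de taquin slide from an inside corner, acting on (outer shape, inner
shape, filling) triples: the hole starts at an inside corner `c`, elementary slides are
repeated until the hole has no neighbor to its right or below, and then the hole
(at an outside corner `h`) is removed. -/
def SlideRel {α : Type*} [LinearOrder α] :
    ((ℕ → ℕ) × (ℕ → ℕ) × (ℕ × ℕ → α)) → ((ℕ → ℕ) × (ℕ → ℕ) × (ℕ × ℕ → α)) → Prop :=
  fun p q =>
    ∃ c h : ℕ × ℕ, InsideCorner p.1 p.2.1 c ∧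
      Relation.ReflTransGen JdtStep (c, cells p.1 p.2.1, p.2.2)
        (h, insert c (cells p.1 p.2.1) \ {h}, q.2.2) ∧
      (h.1, h.2 + 1) ∉ insert c (cells p.1 p.2.1) ∧
      (h.1 + 1, h.2) ∉ insert c (cells p.1 p.2.1) ∧
      h.2 = p.1 h.1 ∧
      q.1 = Function.update p.1 h.1 (h.2 - 1) ∧
      q.2.1 = Function.update p.2.1 c.1 (c.2 - 1)


/-!
The label that `φ_w` gives to a position depends only on the letter there and on the multiset
of letters before it. Exchanging two adjacent distinct letters `a ≠ c` therefore leaves their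
labels unchanged (each label counts only occurrences of its own letter) and does not affect
the labels further right, so `φ_w(u·cab·v)` is `φ_w(u·acb·v)` with the same two labelled
letters exchanged. The labelled letters keep the inequalities `a_i ≤ b_j < c_k`: if `a = b`,
the occurrence of `a` comes first and so carries the smaller label.
-/

/-- `phiFrom u t` labels the letters of `t` as `φ_{u ++ t}` labels the suffix `t`. -/
def phiFrom (u : List ℕ) : List ℕ → List LblN
  | [] => []
  | x :: t => toLex (x, u.count x + 1) :: phiFrom (u ++ [x]) t

lemma phiFrom_eq_map_zip (u w : List ℕ) :
    phiFrom u w = ((List.range w.length).zip w).map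
      fun p => toLex (p.2, (u ++ w.take p.1).count p.2 + 1) := by
  induction w generalizing u with
  | nil => rfl
  | cons x t ih =>
    rw [List.length_cons, List.range_succ_eq_map, List.zip_cons_cons, List.zip_map_left]
    simp only [phiFrom, ih, List.map_cons, List.take_zero, List.append_nil, List.map_map]
    congr 2
    ext p
    simp [List.append_assoc]

lemma phiW_eq_phiFrom_nil (w : List ℕ) : phiW w = phiFrom [] w := by
  rw [phiFrom_eq_map_zip]
  rfl

lemma phiFrom_append (u s t : List ℕ) :
    phiFrom u (s ++ t) = phiFrom u s ++ phiFrom (u ++ s) t := by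
  induction s generalizing u with
  | nil => simp [phiFrom]
  | cons x s ih => simp [phiFrom, ih, List.append_assoc]

lemma phiW_append (s t : List ℕ) : phiW (s ++ t) = phiW s ++ phiFrom s t := by
  rw [phiW_eq_phiFrom_nil, phiW_eq_phiFrom_nil, phiFrom_append, List.nil_append]

lemma phiFrom_congr_of_perm {u u' : List ℕ} (h : u.Perm u') (t : List ℕ) :
    phiFrom u t = phiFrom u' t := by
  induction t generalizing u u' with
  | nil => rfl
  | cons x t ih => simp only [phiFrom, h.count_eq x, ih (h.append_right [x])]

lemma phiFrom_cons_cons_of_ne {x y : ℕ} (hxy : x ≠ y) (u t : List ℕ) :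
    phiFrom u (x :: y :: t) =
      toLex (x, u.count x + 1) :: toLex (y, u.count y + 1) :: phiFrom (u ++ [x, y]) t := by
  simp [phiFrom, List.count_append, hxy]

lemma phiFrom_cons_cons_swap {x y : ℕ} (hxy : x ≠ y) (u t : List ℕ) :
    phiFrom u (y :: x :: t) =
      toLex (y, u.count y + 1) :: toLex (x, u.count x + 1) :: phiFrom (u ++ [x, y]) t := by
  rw [phiFrom_cons_cons_of_ne hxy.symm,
    phiFrom_congr_of_perm ((List.Perm.swap x y []).append_left u)]

lemma toLex_count_le_toLex_count {a b : ℕ} (hab : a ≤ b) (u s : List ℕ) :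
    toLex (a, u.count a + 1) ≤ toLex (b, (u ++ s).count b + 1) := by
  rw [Prod.Lex.toLex_le_toLex]
  rcases hab.lt_or_eq with hlt | rfl
  · exact Or.inl hlt
  · exact Or.inr ⟨rfl, by simp [List.count_append]⟩

theorem knuthK'_phiW (w w' : List ℕ) (h : KnuthK' w w') : KnuthK' (phiW w) (phiW w') := by
  obtain ⟨u, v, a, b, c, hab, hbc, rfl, rfl⟩ := h
  have hac : a ≠ c := (hab.trans_lt hbc).ne
  refine ⟨phiW u, phiFrom (u ++ [a, c, b]) v, toLex (a, u.count a + 1),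
    toLex (b, (u ++ [a, c]).count b + 1), toLex (c, u.count c + 1),
    toLex_count_le_toLex_count hab u [a, c], Prod.Lex.toLex_lt_toLex.mpr (Or.inl hbc), ?_, ?_⟩
  · rw [phiW_append, phiW_append, phiFrom_cons_cons_of_ne hac]
    rfl
  · rw [phiW_append, phiW_append, phiFrom_cons_cons_swap hac,
      phiFrom_congr_of_perm ((List.Perm.swap a c [b]).append_left u)]
    rfl
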